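/- arXiv:hep-th/9802145 — 3 statements merged into one kernel-verified Lean document; each statement's English description precedes it below -/
import Mathlib

section
/- Let η : [0,∞) → ℝ be given by η(x) = e^{-x}, let m ≥ 0 and 0 < a < b. Then ∫_{ℝ^2} (p² + m²)^{-1/2} · [η((p²+m²)/b²) − η((p²+m²)/a²)] dp/(2π)² ≤ K·(b − a) for some universal constant K; explicitly the integral equals (1/4π)∫_{b^{-2}}^{a^{-2}} α^{-3/2} (∫_0^∞ √v e^{-v} dv) dα up to bounding, which is at most K(b − a). -/
/-!
In polar coordinates, with `u = ‖p‖²`, the integral becomes `|B₁| ∫₀^∞ F(u + m²) du / (2π)²`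
where `F(s) = s^{-1/2} (e^{-s/b²} - e^{-s/a²}) ≥ 0`. Since `F ≥ 0`, dropping the shift `m²` can
only increase the integral, and `∫₀^∞ s^{-1/2} e^{-s/c²} ds = Γ(1/2) |c| = √π |c|`, so the
integral is at most `|B₁| √π (b - a) / (2π)²`.
-/

open MeasureTheory Real Set Metric

lemma inv_sqrt_mul_exp_eq_rpow {c s : ℝ} (hs : 0 < s) :
    1 / √s * exp (-(s / c ^ 2)) = s ^ ((1 : ℝ) / 2 - 1) * exp (-((c ^ 2)⁻¹ * s)) := by
  rw [show (1 : ℝ) / 2 - 1 = -(1 / 2) by norm_num, rpow_neg hs.le, ← sqrt_eq_rpow, one_div,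
    div_eq_inv_mul]

lemma integrableOn_inv_sqrt_mul_exp_neg_div_sq {c : ℝ} (hc : c ≠ 0) :
    IntegrableOn (fun s ↦ 1 / √s * exp (-(s / c ^ 2))) (Ioi 0) := by
  refine (integrableOn_rpow_mul_exp_neg_mul_rpow (p := 1) (s := 1 / 2 - 1) (b := (c ^ 2)⁻¹)
    (by norm_num) one_pos (by positivity)).congr_fun (fun s hs ↦ ?_) measurableSet_Ioi
  simp only [rpow_one, neg_mul, inv_sqrt_mul_exp_eq_rpow hs]

lemma integral_inv_sqrt_mul_exp_neg_div_sq {c : ℝ} (hc : c ≠ 0) :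
    ∫ s in Ioi 0, 1 / √s * exp (-(s / c ^ 2)) = |c| * √π := by
  rw [setIntegral_congr_fun measurableSet_Ioi fun s hs ↦ inv_sqrt_mul_exp_eq_rpow hs,
    integral_rpow_mul_exp_neg_mul_Ioi (by norm_num) (by positivity), Gamma_one_half_eq,
    one_div, inv_inv, ← sqrt_eq_rpow, sqrt_sq_eq_abs]

lemma setIntegral_Ioi_comp_add_le {f : ℝ → ℝ} (hf : IntegrableOn f (Ioi 0))
    (hf_nonneg : ∀ s, 0 < s → 0 ≤ f s) {c : ℝ} (hc : 0 ≤ c) :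
    ∫ u in Ioi 0, f (u + c) ≤ ∫ s in Ioi 0, f s := by
  have hshift : ∫ u in Ioi 0, f (u + c) = ∫ s in Ioi c, f s := by
    simpa using (measurePreserving_add_right volume c).setIntegral_preimage_emb
      (MeasurableEquiv.addRight c).measurableEmbedding f (Ioi c)
  rw [hshift]
  exact setIntegral_mono_set hf
    ((ae_restrict_iff' measurableSet_Ioi).2 (ae_of_all _ hf_nonneg))
    (Ioi_subset_Ioi hc).eventuallyLE

theorem integral_fun_norm_sq_of_finrank_eq_two {E F : Type*} [NormedAddCommGroup E]
    [NormedSpace ℝ E] [FiniteDimensional ℝ E] [MeasurableSpace E] [BorelSpace E]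
    [NormedAddCommGroup F] [NormedSpace ℝ F]
    (μ : Measure E) [μ.IsAddHaarMeasure] (hE : Module.finrank ℝ E = 2) (f : ℝ → F) :
    ∫ x, f (‖x‖ ^ 2) ∂μ = μ.real (ball 0 1) • ∫ u in Ioi 0, f u := by
  have : Nontrivial E := Module.nontrivial_of_finrank_eq_succ hE
  have hjac : ∫ y in Ioi 0, (2 * y ^ ((2 : ℝ) - 1)) • f (y ^ (2 : ℝ)) =
      (2 : ℝ) • ∫ y in Ioi 0, y ^ (2 - 1) • f (y ^ 2) := by
    rw [← integral_smul]
    refine setIntegral_congr_fun measurableSet_Ioi fun y _ ↦ ?_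
    norm_num [mul_smul]
  rw [integral_fun_norm_addHaar μ (fun r ↦ f (r ^ 2)), hE,
    ← integral_comp_rpow_Ioi_of_pos (g := f) two_pos, hjac, smul_comm, ← Nat.cast_smul_eq_nsmul ℝ]
  norm_num

noncomputable def propagatorSlice (a b s : ℝ) : ℝ :=
  1 / √s * (exp (-(s / b ^ 2)) - exp (-(s / a ^ 2)))

lemma propagatorSlice_nonneg {a b s : ℝ} (ha : 0 < a) (hab : a ≤ b) (hs : 0 ≤ s) :
    0 ≤ propagatorSlice a b s := by
  refine mul_nonneg (by positivity) (sub_nonneg.2 (exp_le_exp.2 (neg_le_neg ?_)))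
  exact div_le_div_of_nonneg_left hs (by positivity) (pow_le_pow_left₀ ha.le hab 2)

lemma integrableOn_propagatorSlice {a b : ℝ} (ha : a ≠ 0) (hb : b ≠ 0) :
    IntegrableOn (propagatorSlice a b) (Ioi 0) := by
  unfold propagatorSlice
  simp only [mul_sub]
  exact (integrableOn_inv_sqrt_mul_exp_neg_div_sq hb).sub
    (integrableOn_inv_sqrt_mul_exp_neg_div_sq ha)

lemma integral_propagatorSlice {a b : ℝ} (ha : a ≠ 0) (hb : b ≠ 0) :
    ∫ s in Ioi 0, propagatorSlice a b s = (|b| - |a|) * √π := by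
  simp only [propagatorSlice, mul_sub]
  rw [integral_sub (integrableOn_inv_sqrt_mul_exp_neg_div_sq hb)
    (integrableOn_inv_sqrt_mul_exp_neg_div_sq ha), integral_inv_sqrt_mul_exp_neg_div_sq hb,
    integral_inv_sqrt_mul_exp_neg_div_sq ha, sub_mul]

lemma integral_propagatorSlice_comp_add_le {a b c : ℝ} (ha : 0 < a) (hab : a ≤ b) (hc : 0 ≤ c) :
    ∫ u in Ioi 0, propagatorSlice a b (u + c) ≤ (b - a) * √π := by
  have hb : 0 < b := ha.trans_le hab
  calc ∫ u in Ioi 0, propagatorSlice a b (u + c) ≤ ∫ s in Ioi 0, propagatorSlice a b s :=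
        setIntegral_Ioi_comp_add_le (integrableOn_propagatorSlice ha.ne' hb.ne')
          (fun s hs ↦ propagatorSlice_nonneg ha hab hs.le) hc
    _ = (b - a) * √π := by
        rw [integral_propagatorSlice ha.ne' hb.ne', abs_of_pos ha, abs_of_pos hb]

theorem stmt_8 :
    ∃ K : ℝ, 0 < K ∧ ∀ (m a b : ℝ), 0 ≤ m → 0 < a → a < b →
      (∫ p : EuclideanSpace ℝ (Fin 2),
        (1 / Real.sqrt (‖p‖ ^ 2 + m ^ 2)) *
          (Real.exp (-((‖p‖ ^ 2 + m ^ 2) / b ^ 2)) -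
            Real.exp (-((‖p‖ ^ 2 + m ^ 2) / a ^ 2))) / (2 * π) ^ 2)
        ≤ K * (b - a) := by
  set C := volume.real (ball (0 : EuclideanSpace ℝ (Fin 2)) 1)
  have hC : 0 < C := ENNReal.toReal_pos (measure_ball_pos _ _ one_pos).ne' measure_ball_lt_top.ne
  refine ⟨C * √π / (2 * π) ^ 2, by positivity, fun m a b _ ha hab ↦ ?_⟩
  calc ∫ p : EuclideanSpace ℝ (Fin 2), propagatorSlice a b (‖p‖ ^ 2 + m ^ 2) / (2 * π) ^ 2
      = C * (∫ u in Ioi 0, propagatorSlice a b (u + m ^ 2)) / (2 * π) ^ 2 := by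
        rw [integral_div, integral_fun_norm_sq_of_finrank_eq_two volume finrank_euclideanSpace_fin
          (fun u ↦ propagatorSlice a b (u + m ^ 2)), smul_eq_mul]
    _ ≤ C * ((b - a) * √π) / (2 * π) ^ 2 := by
        gcongr
        exact integral_propagatorSlice_comp_add_le ha hab.le (sq_nonneg m)
    _ = C * √π / (2 * π) ^ 2 * (b - a) := by ring
end

section
/- Let L_1, …, L_r be nonnegative integers with grouping structure given by a forest: each index g has a (possibly empty) set A'(g) of earlier indices, with each index belonging to A'(g) for at most one g, and ∑_g L_g ≤ n − 1 with 2r ≤ n − 1. Then ∏_{g=1}^r [∑_{j_g=1}^{L_g + ∑_{g'∈A'(g)} k_{g'}} ∑_{k_g=1}^{j_g} 1] (the total number of choices of pairs (j_g, k_g) made inductively in order) is at most e^{2n}. -/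
open Finset

private lemma sum_fin_succ_finset {m : ℕ} (s : Finset (Fin (m+1))) (F : Fin (m+1) → ℕ) :
    ∑ x ∈ s, F x
      = (if (0 : Fin (m+1)) ∈ s then F 0 else 0)
        + ∑ g ∈ Finset.univ.filter (fun g : Fin m => g.succ ∈ s), F g.succ := by
  classical
  have h1 : ∑ x ∈ s, F x = ∑ x : Fin (m+1), if x ∈ s then F x else 0 := by
    rw [Finset.sum_ite_mem, Finset.univ_inter]
  rw [h1, Fin.sum_univ_succ, Finset.sum_filter]

private lemma sum_exp_le (j : ℕ) : ∑ k ∈ Finset.Icc 1 j, Real.exp k ≤ Real.exp (j+1) := by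
  induction j with
  | zero => simp; positivity
  | succ j ih =>
    rw [show Finset.Icc 1 (j+1) = insert (j+1) (Finset.Icc 1 j) from
      (Finset.insert_Icc_right_eq_Icc_add_one (by omega)).symm]
    rw [Finset.sum_insert (by simp)]
    push_cast
    have h2 : (2:ℝ) ≤ Real.exp 1 := by
      have := Real.add_one_le_exp 1; linarith
    calc Real.exp (j+1) + ∑ k ∈ Finset.Icc 1 j, Real.exp k
        ≤ Real.exp (j+1) + Real.exp (j+1) := by linarith [ih]
      _ = 2 * Real.exp (j+1) := by ring
      _ ≤ Real.exp 1 * Real.exp (j+1) := by nlinarith [Real.exp_pos ((j:ℝ)+1)]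
      _ = Real.exp (j+1+1) := by rw [← Real.exp_add]; ring_nf

private abbrev Valid (m : ℕ) (L : Fin m → ℕ) (A' : Fin m → Finset (Fin m)) : Type :=
  {f : Fin m → ℕ × ℕ // ∀ g, 1 ≤ (f g).2 ∧ (f g).2 ≤ (f g).1 ∧
      (f g).1 ≤ L g + ∑ g' ∈ A' g, (f g').2}

private theorem key (m : ℕ) : ∀ (L : Fin m → ℕ) (A' : Fin m → Finset (Fin m)),
    (∀ g, ∀ g' ∈ A' g, g' < g) →
    (∀ g₁ g₂ g', g' ∈ A' g₁ → g' ∈ A' g₂ → g₁ = g₂) →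
    Finite (Valid m L A') ∧
      (Nat.card (Valid m L A') : ℝ) ≤ Real.exp ((2*m + ∑ g, L g : ℕ)) := by
  induction m with
  | zero =>
    intro L A' _ _
    have hsub : Subsingleton (Valid 0 L A') :=
      ⟨fun a b => Subtype.ext (funext fun i => i.elim0)⟩
    refine ⟨@Finite.of_subsingleton _ hsub, ?_⟩
    have h1 : Nat.card (Valid 0 L A') = 1 :=
      @Nat.card_unique _ ⟨⟨fun i => i.elim0, fun g => g.elim0⟩⟩ hsub
    calc (Nat.card (Valid 0 L A') : ℝ) ≤ 1 := by rw [h1]; norm_num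
      _ ≤ Real.exp ((2*0 + ∑ g : Fin 0, L g : ℕ)) := Real.one_le_exp (by positivity)
  | succ m ih =>
    intro L A' hE hU
    classical
    set S : Finset (ℕ × ℕ) :=
      (Finset.Icc 1 (L 0) ×ˢ Finset.Icc 1 (L 0)).filter (fun p => p.2 ≤ p.1) with hS
    have memS : ∀ p : ℕ × ℕ, p ∈ S ↔ 1 ≤ p.2 ∧ p.2 ≤ p.1 ∧ p.1 ≤ L 0 := by
      intro p
      simp only [hS, Finset.mem_filter, Finset.mem_product, Finset.mem_Icc]
      omega
    set A'' : Fin m → Finset (Fin m) :=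
      fun h => Finset.univ.filter (fun g : Fin m => g.succ ∈ A' h.succ) with hA''
    set L' : ℕ × ℕ → Fin m → ℕ :=
      fun p h => L h.succ + (if (0:Fin (m+1)) ∈ A' h.succ then p.2 else 0) with hL'
    have hE'' : ∀ h, ∀ g ∈ A'' h, g < h := by
      intro h g hg
      simp only [hA'', Finset.mem_filter, Finset.mem_univ, true_and] at hg
      exact Fin.succ_lt_succ_iff.mp (hE h.succ g.succ hg)
    have hU'' : ∀ h₁ h₂ g, g ∈ A'' h₁ → g ∈ A'' h₂ → h₁ = h₂ := by
      intro h₁ h₂ g hg₁ hg₂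
      simp only [hA'', Finset.mem_filter, Finset.mem_univ, true_and] at hg₁ hg₂
      exact Fin.succ_injective _ (hU h₁.succ h₂.succ g.succ hg₁ hg₂)
    have hA0 : A' 0 = ∅ :=
      Finset.eq_empty_of_forall_notMem fun g' hg' => (Fin.not_lt_zero g') (hE 0 g' hg')
    have hsplit : ∀ (f : Fin (m+1) → ℕ × ℕ) (h : Fin m),
        ∑ g' ∈ A' h.succ, (f g').2
          = (if (0:Fin (m+1)) ∈ A' h.succ then (f 0).2 else 0)
            + ∑ g ∈ A'' h, (f g.succ).2 :=
      fun f h => sum_fin_succ_finset (A' h.succ) (fun g' => (f g').2)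
    -- the injection
    have hΦ : ∀ f : Valid (m+1) L A', f.1 0 ∈ S := by
      intro f
      obtain ⟨h1, h2, h3⟩ := f.2 0
      rw [hA0] at h3
      simp only [Finset.sum_empty, add_zero] at h3
      exact (memS _).mpr ⟨h1, h2, h3⟩
    have hΦ2 : ∀ f : Valid (m+1) L A', ∀ h : Fin m,
        1 ≤ (f.1 h.succ).2 ∧ (f.1 h.succ).2 ≤ (f.1 h.succ).1 ∧
          (f.1 h.succ).1 ≤ L' (f.1 0) h + ∑ g ∈ A'' h, (f.1 g.succ).2 := by
      intro f h
      obtain ⟨h1, h2, h3⟩ := f.2 h.succ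
      refine ⟨h1, h2, ?_⟩
      rw [hsplit f.1 h] at h3
      simp only [hL']
      rw [add_assoc]
      exact h3
    let Φ : Valid (m+1) L A' → Σ p : {p : ℕ × ℕ // p ∈ S}, Valid m (L' p.1) A'' :=
      fun f => ⟨⟨f.1 0, hΦ f⟩, ⟨fun h => f.1 h.succ, hΦ2 f⟩⟩
    have hΦinj : Function.Injective Φ := by
      intro f f' hff
      have e0 : f.1 0 = f'.1 0 :=
        congrArg (fun q : Σ p : {p : ℕ × ℕ // p ∈ S}, Valid m (L' p.1) A'' => q.1.1) hff
      have etail : (fun h : Fin m => f.1 h.succ) = (fun h : Fin m => f'.1 h.succ) :=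
        congrArg (fun q : Σ p : {p : ℕ × ℕ // p ∈ S}, Valid m (L' p.1) A'' => q.2.1) hff
      refine Subtype.ext (funext fun i => ?_)
      refine Fin.cases e0 (fun h => ?_) i
      exact congrFun etail h
    have hfibFin : ∀ p : {p : ℕ × ℕ // p ∈ S}, Finite (Valid m (L' p.1) A'') :=
      fun p => (ih (L' p.1) A'' hE'' hU'').1
    haveI := hfibFin
    haveI : Finite (Σ p : {p : ℕ × ℕ // p ∈ S}, Valid m (L' p.1) A'') := by
      infer_instance
    refine ⟨Finite.of_injective Φ hΦinj, ?_⟩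
    have hcard1 : Nat.card (Valid (m+1) L A')
        ≤ Nat.card (Σ p : {p : ℕ × ℕ // p ∈ S}, Valid m (L' p.1) A'') :=
      Nat.card_le_card_of_injective Φ hΦinj
    haveI : ∀ p : {p : ℕ × ℕ // p ∈ S}, Fintype (Valid m (L' p.1) A'') :=
      fun p => Fintype.ofFinite _
    have hcard2 : Nat.card (Σ p : {p : ℕ × ℕ // p ∈ S}, Valid m (L' p.1) A'')
        = ∑ p : {p : ℕ × ℕ // p ∈ S}, Nat.card (Valid m (L' p.1) A'') := by
      rw [Nat.card_eq_fintype_card, Fintype.card_sigma]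
      exact Finset.sum_congr rfl fun p _ => (Nat.card_eq_fintype_card).symm
    -- sum of L' bound
    have hL'sum : ∀ p : ℕ × ℕ, ∑ h, L' p h ≤ (∑ h : Fin m, L h.succ) + p.2 := by
      intro p
      simp only [hL']
      rw [Finset.sum_add_distrib]
      have h1 : ∑ h : Fin m, (if (0:Fin (m+1)) ∈ A' h.succ then p.2 else 0) ≤ p.2 := by
        rw [← Finset.sum_filter]
        rw [Finset.sum_const, smul_eq_mul]
        have hcle : (Finset.univ.filter
            (fun h : Fin m => (0:Fin (m+1)) ∈ A' h.succ)).card ≤ 1 := by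
          refine Finset.card_le_one.mpr fun a ha b hb => ?_
          simp only [Finset.mem_filter, Finset.mem_univ, true_and] at ha hb
          exact Fin.succ_injective _ (hU a.succ b.succ 0 ha hb)
        calc (Finset.univ.filter
              (fun h : Fin m => (0:Fin (m+1)) ∈ A' h.succ)).card * p.2
            ≤ 1 * p.2 := Nat.mul_le_mul_right _ hcle
          _ = p.2 := one_mul _
      omega
    -- the sum over S of exp
    have hSsum : ∑ p ∈ S, Real.exp p.2 ≤ Real.exp ((L 0 : ℝ) + 2) := by
      rw [hS, Finset.sum_filter, Finset.sum_product]
      have hinner : ∀ j ∈ Finset.Icc 1 (L 0),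
          ∑ k ∈ Finset.Icc 1 (L 0), (if k ≤ j then Real.exp k else 0)
            ≤ Real.exp ((j:ℝ)+1) := by
        intro j hj
        rw [← Finset.sum_filter]
        refine le_trans (Finset.sum_le_sum_of_subset_of_nonneg ?_
          (fun k _ _ => (Real.exp_pos _).le)) (sum_exp_le j)
        intro k hk
        simp only [Finset.mem_filter, Finset.mem_Icc] at hk ⊢
        exact ⟨hk.1.1, hk.2⟩
      calc ∑ j ∈ Finset.Icc 1 (L 0), ∑ k ∈ Finset.Icc 1 (L 0),
              (if k ≤ j then Real.exp k else 0)
          ≤ ∑ j ∈ Finset.Icc 1 (L 0), Real.exp ((j:ℝ)+1) :=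
            Finset.sum_le_sum hinner
        _ = Real.exp 1 * ∑ j ∈ Finset.Icc 1 (L 0), Real.exp j := by
            rw [Finset.mul_sum]
            exact Finset.sum_congr rfl fun j _ => by rw [← Real.exp_add]; ring_nf
        _ ≤ Real.exp 1 * Real.exp ((L 0 : ℝ) + 1) := by
            have := sum_exp_le (L 0)
            nlinarith [Real.exp_pos (1:ℝ)]
        _ = Real.exp ((L 0 : ℝ) + 2) := by rw [← Real.exp_add]; ring_nf
    -- assemble
    have hmain : (Nat.card (Valid (m+1) L A') : ℝ)
        ≤ Real.exp ((2*m + ∑ h : Fin m, L h.succ : ℕ)) * ∑ p ∈ S, Real.exp p.2 := by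
      have hc : (Nat.card (Valid (m+1) L A') : ℝ)
          ≤ ∑ p : {p : ℕ × ℕ // p ∈ S}, (Nat.card (Valid m (L' p.1) A'') : ℝ) := by
        rw [← Nat.cast_sum]
        exact_mod_cast hcard1.trans (le_of_eq hcard2)
      refine hc.trans ?_
      have hstep : ∀ p : {p : ℕ × ℕ // p ∈ S},
          (Nat.card (Valid m (L' p.1) A'') : ℝ)
            ≤ Real.exp ((2*m + ∑ h : Fin m, L h.succ : ℕ)) * Real.exp p.1.2 := by
        intro p
        refine ((ih (L' p.1) A'' hE'' hU'').2).trans ?_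
        rw [← Real.exp_add]
        refine Real.exp_le_exp.mpr ?_
        have := hL'sum p.1
        have hnat : 2*m + ∑ h, L' p.1 h ≤ (2*m + ∑ h : Fin m, L h.succ) + p.1.2 := by omega
        calc ((2*m + ∑ h, L' p.1 h : ℕ) : ℝ)
            ≤ (((2*m + ∑ h : Fin m, L h.succ) + p.1.2 : ℕ) : ℝ) := by exact_mod_cast hnat
          _ = ((2*m + ∑ h : Fin m, L h.succ : ℕ) : ℝ) + (p.1.2 : ℝ) := by push_cast; ring
      refine (Finset.sum_le_sum fun p _ => hstep p).trans (le_of_eq ?_)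
      rw [← Finset.mul_sum]
      congr 1
      exact Finset.sum_coe_sort S (fun p => Real.exp p.2)
    refine hmain.trans ?_
    calc Real.exp ((2*m + ∑ h : Fin m, L h.succ : ℕ)) * ∑ p ∈ S, Real.exp p.2
        ≤ Real.exp ((2*m + ∑ h : Fin m, L h.succ : ℕ)) * Real.exp ((L 0 : ℝ) + 2) := by
          have := Real.exp_pos (((2*m + ∑ h : Fin m, L h.succ : ℕ) : ℝ))
          nlinarith [hSsum]
      _ = Real.exp (((2*m + ∑ h : Fin m, L h.succ : ℕ) : ℝ) + ((L 0 : ℝ) + 2)) := by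
          rw [← Real.exp_add]
      _ = Real.exp ((2*(m+1) + ∑ g, L g : ℕ)) := by
          congr 1
          have hsum : ∑ g, L g = L 0 + ∑ h : Fin m, L h.succ := Fin.sum_univ_succ L
          push_cast [hsum]
          ring

theorem stmt_13 (r n : ℕ) (L : Fin r → ℕ) (A' : Fin r → Finset (Fin r))
    (hEarlier : ∀ g, ∀ g' ∈ A' g, g' < g)
    (hUnique : ∀ g₁ g₂ g', g' ∈ A' g₁ → g' ∈ A' g₂ → g₁ = g₂)
    (hSum : ∑ g, L g ≤ n - 1) (hr : 2 * r ≤ n - 1) :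
    (Nat.card {jk : Fin r → ℕ × ℕ //
        ∀ g, 1 ≤ (jk g).2 ∧ (jk g).2 ≤ (jk g).1 ∧
          (jk g).1 ≤ L g + ∑ g' ∈ A' g, (jk g').2} : ℝ)
      ≤ Real.exp (2 * n) := by
  have h := (key r L A' hEarlier hUnique).2
  refine h.trans (Real.exp_le_exp.mpr ?_)
  have hnat : 2*r + ∑ g, L g ≤ 2*n := by omega
  calc ((2*r + ∑ g, L g : ℕ) : ℝ) ≤ ((2*n : ℕ) : ℝ) := by exact_mod_cast hnat
    _ = 2 * n := by push_cast; ring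
end

section
/- For every ε' ∈ (0,1) there is a constant K = K(ε') such that for all Λ > 0, m ≥ 0 and x ∈ ℝ²: (Λ³)·e^{-m²/Λ² − |x|²Λ²/4} ≤ K·Λ³·e^{-(1−ε')|x|·max(m,Λ) − ε' m²/(2Λ²)}. In particular the single-slice propagator kernel (x Λ⁴/2 + m Λ²) e^{-m²/Λ² − |x|²Λ²/4} is bounded in norm by K Λ³ e^{-(1−ε')|x| max(m,Λ) − ε' m²/(2Λ²)}. -/
private lemma core16 (a c t s : ℝ) (ha0 : 0 ≤ a) (ha1 : a ≤ 1)
    (hac : a ^ 2 + c ≤ 0) (hc : c ≤ 0) (ht : 0 ≤ t) (_hs : 0 ≤ s) :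
    a * (t * max s 1) + c * s ^ 2 - t ^ 2 / 4 ≤ 1 := by
  rcases le_total s 1 with h | h
  · rw [max_eq_right h]
    nlinarith [sq_nonneg (t / 2 - a), sq_nonneg s, mul_nonneg (sq_nonneg s) (neg_nonneg.mpr hc)]
  · rw [max_eq_left h]
    nlinarith [sq_nonneg (t / 2 - a * s),
      mul_nonneg (sq_nonneg s) (by linarith : (0:ℝ) ≤ -(a ^ 2 + c))]

private lemma lin_le_exp (x : ℝ) : x ≤ Real.exp x := by
  linarith [Real.add_one_le_exp x, Real.exp_pos x]

private lemma wrap16a (P C A B : ℝ) (hC : 0 ≤ C) (hB : 0 ≤ B) (h : P ≤ A) :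
    C * (P * B) ≤ A * C * B := by
  calc C * (P * B) = P * (C * B) := by ring
    _ ≤ A * (C * B) := mul_le_mul_of_nonneg_right h (mul_nonneg hC hB)
    _ = A * C * B := by ring

private lemma wrap16b (q e C A B : ℝ) (hC : 0 ≤ C) (hB : 0 ≤ B) (h : q * e ≤ A) :
    C * q * (e * B) ≤ A * C * B := by
  calc C * q * (e * B) = (q * e) * (C * B) := by ring
    _ ≤ A * (C * B) := mul_le_mul_of_nonneg_right h (mul_nonneg hC hB)
    _ = A * C * B := by ring

private lemma poly16 (ε' t s : ℝ) (hε'0 : 0 < ε') (hε'1 : ε' < 1) (ht : 0 ≤ t) (hs : 0 ≤ s) :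
    (t / 2 + s) *
      Real.exp ((1 - ε') * (t * max s 1) + (ε' / 2 - 1) * s ^ 2 - t ^ 2 / 4)
      ≤ (6 / ε') * Real.exp 2 := by
  set b := max s 1 with hb
  have hb1 : (1:ℝ) ≤ b := le_max_right _ _
  have hb0 : 0 ≤ b := by linarith
  set E := (1 - ε') * (t * b) + (ε' / 2 - 1) * s ^ 2 - t ^ 2 / 4 with hE
  have hEpos := Real.exp_pos E
  have htb : t * b ≤ (4 / ε') * Real.exp (ε' / 4 * (t * b)) := by
    have h1 : ε' / 4 * (t * b) ≤ Real.exp (ε' / 4 * (t * b)) := lin_le_exp _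
    calc t * b = (4 / ε') * (ε' / 4 * (t * b)) := by field_simp
    _ ≤ (4 / ε') * Real.exp (ε' / 4 * (t * b)) :=
        mul_le_mul_of_nonneg_left h1 (by positivity)
  have hss : s ≤ (4 * Real.exp 1 / ε') * Real.exp (ε' / 4 * s ^ 2) := by
    have h1 : ε' / 4 * s ≤ Real.exp (ε' / 4 * s) := lin_le_exp _
    have h3 : Real.exp (ε' / 4 * s) ≤ Real.exp 1 * Real.exp (ε' / 4 * s ^ 2) := by
      rw [← Real.exp_add]
      exact Real.exp_le_exp.mpr (by nlinarith [sq_nonneg (s - 1/2)])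
    calc s = (4 / ε') * (ε' / 4 * s) := by field_simp
    _ ≤ (4 / ε') * (Real.exp 1 * Real.exp (ε' / 4 * s ^ 2)) :=
        mul_le_mul_of_nonneg_left (h1.trans h3) (by positivity)
    _ = (4 * Real.exp 1 / ε') * Real.exp (ε' / 4 * s ^ 2) := by ring
  have hcore1 : E + ε' / 4 * (t * b) ≤ 1 := by
    have h := core16 (1 - 3 * ε' / 4) (ε' / 2 - 1) t s (by linarith) (by linarith)
      (by nlinarith) (by linarith) ht hs
    rw [← hb] at h
    rw [hE]
    linarith [h]
  have hcore2 : E + ε' / 4 * s ^ 2 ≤ 1 := by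
    have h := core16 (1 - ε') (3 * ε' / 4 - 1) t s (by linarith) (by linarith)
      (by nlinarith) (by linarith) ht hs
    rw [← hb] at h
    rw [hE]
    linarith [h]
  have ht2 : t / 2 + s ≤ t * b / 2 + s := by
    have : t ≤ t * b := le_mul_of_one_le_right ht hb1
    linarith
  have step1 : (t / 2 + s) * Real.exp E ≤ (t * b / 2) * Real.exp E + s * Real.exp E := by
    nlinarith [mul_le_mul_of_nonneg_right ht2 hEpos.le]
  have step2 : (t * b / 2) * Real.exp E ≤ (2 / ε') * Real.exp (E + ε' / 4 * (t * b)) := by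
    rw [Real.exp_add]
    calc (t * b / 2) * Real.exp E
        ≤ ((4 / ε') * Real.exp (ε' / 4 * (t * b)) / 2) * Real.exp E :=
          mul_le_mul_of_nonneg_right (by linarith) hEpos.le
    _ = (2 / ε') * (Real.exp E * Real.exp (ε' / 4 * (t * b))) := by ring
  have step3 : s * Real.exp E ≤ (4 * Real.exp 1 / ε') * Real.exp (E + ε' / 4 * s ^ 2) := by
    rw [Real.exp_add]
    calc s * Real.exp E
        ≤ ((4 * Real.exp 1 / ε') * Real.exp (ε' / 4 * s ^ 2)) * Real.exp E :=
          mul_le_mul_of_nonneg_right hss hEpos.le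
    _ = (4 * Real.exp 1 / ε') * (Real.exp E * Real.exp (ε' / 4 * s ^ 2)) := by ring
  have e1 : Real.exp (E + ε' / 4 * (t * b)) ≤ Real.exp 1 := Real.exp_le_exp.mpr hcore1
  have e2 : Real.exp (E + ε' / 4 * s ^ 2) ≤ Real.exp 1 := Real.exp_le_exp.mpr hcore2
  have hexp2 : Real.exp 2 = Real.exp 1 * Real.exp 1 := by
    rw [← Real.exp_add]; norm_num
  have he1 : (1:ℝ) ≤ Real.exp 1 := by linarith [Real.add_one_le_exp (1:ℝ), Real.exp_pos (1:ℝ)]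
  have hpos : (0:ℝ) < 2 / ε' := by positivity
  have hfin : (2 / ε') * Real.exp 1 + (4 * Real.exp 1 / ε') * Real.exp 1
      ≤ (6 / ε') * Real.exp 2 := by
    have h5 : Real.exp 1 ≤ Real.exp 1 * Real.exp 1 := by nlinarith
    have h6 := mul_le_mul_of_nonneg_left h5 hpos.le
    calc (2 / ε') * Real.exp 1 + (4 * Real.exp 1 / ε') * Real.exp 1
        = (2 / ε') * Real.exp 1 + (4 / ε') * (Real.exp 1 * Real.exp 1) := by ring
      _ ≤ (2 / ε') * (Real.exp 1 * Real.exp 1) + (4 / ε') * (Real.exp 1 * Real.exp 1) := by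
          linarith [h6]
      _ = (6 / ε') * (Real.exp 1 * Real.exp 1) := by ring
      _ = (6 / ε') * Real.exp 2 := by rw [hexp2]
  have c2 : (0:ℝ) ≤ 2 / ε' := by positivity
  have c4 : (0:ℝ) ≤ 4 * Real.exp 1 / ε' := by positivity
  calc (t / 2 + s) * Real.exp E
      ≤ (t * b / 2) * Real.exp E + s * Real.exp E := step1
    _ ≤ (2 / ε') * Real.exp (E + ε' / 4 * (t * b)) +
        (4 * Real.exp 1 / ε') * Real.exp (E + ε' / 4 * s ^ 2) := by linarith
    _ ≤ (2 / ε') * Real.exp 1 + (4 * Real.exp 1 / ε') * Real.exp 1 := by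
        have i1 := mul_le_mul_of_nonneg_left e1 c2
        have i2 := mul_le_mul_of_nonneg_left e2 c4
        linarith
    _ ≤ (6 / ε') * Real.exp 2 := hfin

theorem stmt_16 (ε' : ℝ) (hε'0 : 0 < ε') (hε'1 : ε' < 1) :
    ∃ K : ℝ, 0 < K ∧ ∀ (Λ m : ℝ) (x : EuclideanSpace ℝ (Fin 2)),
      0 < Λ → 0 ≤ m →
      Λ ^ 3 * Real.exp (-(m ^ 2 / Λ ^ 2) - ‖x‖ ^ 2 * Λ ^ 2 / 4)
          ≤ K * Λ ^ 3 *
            Real.exp (-((1 - ε') * ‖x‖ * max m Λ) - ε' * m ^ 2 / (2 * Λ ^ 2)) ∧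
      (‖x‖ * Λ ^ 4 / 2 + m * Λ ^ 2) *
            Real.exp (-(m ^ 2 / Λ ^ 2) - ‖x‖ ^ 2 * Λ ^ 2 / 4)
          ≤ K * Λ ^ 3 *
            Real.exp (-((1 - ε') * ‖x‖ * max m Λ) - ε' * m ^ 2 / (2 * Λ ^ 2)) := by
  refine ⟨(6 / ε') * Real.exp 2, by positivity, ?_⟩
  intro Λ m x hΛ hm
  have hr : 0 ≤ ‖x‖ := norm_nonneg x
  have ht : 0 ≤ ‖x‖ * Λ := mul_nonneg hr hΛ.le
  have hs : 0 ≤ m / Λ := div_nonneg hm hΛ.le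
  have hΛne : Λ ≠ 0 := hΛ.ne'
  have hmax : max m Λ = max (m / Λ) 1 * Λ := by
    rw [max_mul_of_nonneg _ _ hΛ.le, one_mul, div_mul_cancel₀ _ hΛne]
  have hReq : -((1 - ε') * ‖x‖ * max m Λ) - ε' * m ^ 2 / (2 * Λ ^ 2)
      = -((1 - ε') * ((‖x‖ * Λ) * max (m / Λ) 1)) - ε' * m ^ 2 / (2 * Λ ^ 2) := by
    rw [hmax]; ring
  have key : -(m ^ 2 / Λ ^ 2) - ‖x‖ ^ 2 * Λ ^ 2 / 4
      = ((1 - ε') * ((‖x‖ * Λ) * max (m / Λ) 1) + (ε' / 2 - 1) * (m / Λ) ^ 2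
          - (‖x‖ * Λ) ^ 2 / 4)
        + (-((1 - ε') * ((‖x‖ * Λ) * max (m / Λ) 1)) - ε' * m ^ 2 / (2 * Λ ^ 2)) := by
    generalize max (m / Λ) 1 = b
    field_simp
    ring
  have hexpE : Real.exp ((1 - ε') * ((‖x‖ * Λ) * max (m / Λ) 1)
      + (ε' / 2 - 1) * (m / Λ) ^ 2 - (‖x‖ * Λ) ^ 2 / 4) ≤ Real.exp 1 := by
    apply Real.exp_le_exp.mpr
    exact core16 (1 - ε') (ε' / 2 - 1) (‖x‖ * Λ) (m / Λ) (by linarith) (by linarith)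
      (by nlinarith) (by linarith) ht hs
  have hK : Real.exp 1 ≤ (6 / ε') * Real.exp 2 := by
    have he1 : (1:ℝ) ≤ Real.exp 1 := by linarith [Real.add_one_le_exp (1:ℝ), Real.exp_pos (1:ℝ)]
    have h12 : Real.exp 1 ≤ Real.exp 2 := Real.exp_le_exp.mpr (by norm_num)
    have h6 : (1:ℝ) ≤ 6 / ε' := by rw [le_div_iff₀ hε'0]; linarith
    nlinarith [Real.exp_pos (2:ℝ)]
  have hRpos : (0:ℝ) ≤ Real.exp (-((1 - ε') * ((‖x‖ * Λ) * max (m / Λ) 1))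
      - ε' * m ^ 2 / (2 * Λ ^ 2)) := (Real.exp_pos _).le
  constructor
  · rw [hReq, key, Real.exp_add]
    exact wrap16a _ _ _ _ (by positivity) hRpos (hexpE.trans hK)
  · rw [hReq, key, Real.exp_add]
    have hcoef : ‖x‖ * Λ ^ 4 / 2 + m * Λ ^ 2 = Λ ^ 3 * ((‖x‖ * Λ) / 2 + m / Λ) := by
      field_simp
    rw [hcoef]
    exact wrap16b _ _ _ _ _ (by positivity) hRpos
      (poly16 ε' (‖x‖ * Λ) (m / Λ) hε'0 hε'1 ht hs)
end
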